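/- arXiv:1212.2052 — 3 statements merged into one kernel-verified Lean document; each statement's English description precedes it below -/
import Mathlib

section
/- Let V be an n-dimensional real Hilbert space, ε > 0, L > 0, T a bilinear form on V with |T| ≤ L, and let {e₁,...,e_k} ⊂ V be an ε-orthogonal collection (⟨eᵢ,eⱼ⟩ = δᵢⱼ ± ε). If ||T|² − Σ_{i,j=1}^k (T(eᵢ,eⱼ))²| < ε, then |Tr T − Σ_{i=1}^k T(eᵢ,eᵢ)| < Ψ(ε; n, L), where Ψ(ε; n, L) → 0 as ε → 0 for fixed n, L. -/
open Filter Topology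

/-- The squared Hilbert–Schmidt norm of a bilinear form on `EuclideanSpace ℝ (Fin n)`,
computed via the standard orthonormal basis. -/
noncomputable def bilinNormSq (n : ℕ)
    (T : EuclideanSpace ℝ (Fin n) →ₗ[ℝ] EuclideanSpace ℝ (Fin n) →ₗ[ℝ] ℝ) : ℝ :=
  ∑ i : Fin n, ∑ j : Fin n,
    (T (EuclideanSpace.single i (1 : ℝ)) (EuclideanSpace.single j (1 : ℝ))) ^ 2

/-- The trace of a bilinear form on `EuclideanSpace ℝ (Fin n)` with respect to the
inner product. -/
noncomputable def bilinTrace (n : ℕ)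
    (T : EuclideanSpace ℝ (Fin n) →ₗ[ℝ] EuclideanSpace ℝ (Fin n) →ₗ[ℝ] ℝ) : ℝ :=
  ∑ i : Fin n, T (EuclideanSpace.single i (1 : ℝ)) (EuclideanSpace.single i (1 : ℝ))

/-!
Write `A` for the matrix of `T`, `E` for the matrix with columns `eᵢ`, and `M = E Eᵀ`. The
hypotheses say that `EᵀE ≈ 1`, so `M` is an approximate orthogonal projection
(`M² - M = E (EᵀE - 1) Eᵀ` is small), and that `‖Eᵀ A E‖² = tr (Aᵀ M A M)` nearly exhausts
`‖A‖²`. Expanding `‖A - M A M‖²` then shows `A ≈ M A M`, whence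
`tr A ≈ tr (M A M) ≈ tr (A M) = tr (Eᵀ A E)`.
The constants depend on `n` only because a nearly orthonormal family has at most `n` members: its
Gram matrix is diagonally dominant, hence invertible, and has rank at most `n`. For large `ε` one
uses instead that `Eᵀ A E` has rank at most `n`, so its trace is at most `√n` times its norm.
-/

open Matrix
open scoped Matrix.Norms.Frobenius MatrixOrder

section Frobenius

variable {m n ι : Type*} [Fintype m] [Fintype n] [Fintype ι]

theorem frobenius_norm_sq_eq_sum (A : Matrix m n ℝ) : ‖A‖ ^ 2 = ∑ i, ∑ j, A i j ^ 2 := by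
  rw [frobenius_norm_def, ← Real.sqrt_eq_rpow, Real.sq_sqrt (by positivity)]
  simp

theorem frobenius_norm_sq_eq_trace (A : Matrix m n ℝ) : ‖A‖ ^ 2 = trace (Aᵀ * A) := by
  rw [frobenius_norm_sq_eq_sum, trace, Finset.sum_comm]
  simp [mul_apply, sq]

theorem abs_trace_mul_le (A : Matrix m n ℝ) (B : Matrix n m ℝ) :
    |trace (A * B)| ≤ ‖A‖ * ‖B‖ := by
  have hAB : trace (A * B) = ∑ p : m × n, A p.1 p.2 * Bᵀ p.1 p.2 := by
    simp [trace, mul_apply, Fintype.sum_prod_type]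
  apply abs_le_of_sq_le_sq _ (by positivity)
  rw [hAB, mul_pow, frobenius_norm_sq_eq_sum, ← frobenius_norm_transpose B,
    frobenius_norm_sq_eq_sum]
  simpa only [Fintype.sum_prod_type] using
    Finset.sum_mul_sq_le_sq_mul_sq Finset.univ (fun p : m × n => A p.1 p.2) (fun p => Bᵀ p.1 p.2)

theorem abs_trace_le [DecidableEq n] (A : Matrix n n ℝ) :
    |trace A| ≤ √(Fintype.card n) * ‖A‖ := by
  have hone : ‖(1 : Matrix n n ℝ)‖ = √(Fintype.card n) := by
    simpa using congrArg NNReal.toReal (frobenius_nnnorm_one (n := n) (α := ℝ))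
  simpa [hone] using abs_trace_mul_le (1 : Matrix n n ℝ) A

theorem frobenius_norm_sq_le_of_abs_le {A : Matrix m n ℝ} {c : ℝ} (h : ∀ i j, |A i j| ≤ c) :
    ‖A‖ ^ 2 ≤ Fintype.card m * Fintype.card n * c ^ 2 := by
  rw [frobenius_norm_sq_eq_sum]
  calc ∑ i, ∑ j, A i j ^ 2 ≤ ∑ _i : m, ∑ _j : n, c ^ 2 := by
        refine Finset.sum_le_sum fun i _ => Finset.sum_le_sum fun j _ => ?_
        exact sq_le_sq' (abs_le.mp (h i j)).1 (abs_le.mp (h i j)).2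
    _ = _ := by simp [mul_assoc]

theorem trace_transpose_mul_mul (A : Matrix m m ℝ) (E : Matrix m n ℝ) :
    trace (Eᵀ * A * E) = trace (A * (E * Eᵀ)) := by
  rw [trace_mul_cycle, trace_mul_cycle, Matrix.mul_assoc]

theorem frobenius_norm_transpose_mul_mul_sq (A : Matrix m m ℝ) (E : Matrix m n ℝ) :
    ‖Eᵀ * A * E‖ ^ 2 = trace (Aᵀ * (E * Eᵀ) * A * (E * Eᵀ)) := by
  rw [frobenius_norm_sq_eq_trace]
  simp only [transpose_mul, transpose_transpose, Matrix.mul_assoc]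
  rw [trace_mul_comm]
  simp only [Matrix.mul_assoc]

/-- Writing `E Eᵀ = Rᵀ R`, the matrices `Eᵀ A E` and `R A Rᵀ` have the same trace and norm, and the
latter is square of size `card m`. -/
theorem abs_trace_transpose_mul_mul_le [DecidableEq m] (A : Matrix m m ℝ) (E : Matrix m n ℝ) :
    |trace (Eᵀ * A * E)| ≤ √(Fintype.card m) * ‖Eᵀ * A * E‖ := by
  obtain ⟨R, hR⟩ : ∃ R : Matrix m m ℝ, E * Eᵀ = star R * R :=
    CStarAlgebra.nonneg_iff_eq_star_mul_self.mp (posSemidef_self_mul_conjTranspose E).nonneg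
  rw [star_eq_conjTranspose, conjTranspose_eq_transpose_of_trivial] at hR
  have htrace : trace (Eᵀ * A * E) = trace (Rᵀᵀ * A * Rᵀ) := by
    rw [trace_transpose_mul_mul, trace_transpose_mul_mul, transpose_transpose, hR]
  have hnorm : ‖Eᵀ * A * E‖ = ‖Rᵀᵀ * A * Rᵀ‖ := by
    rw [← sq_eq_sq₀ (norm_nonneg _) (norm_nonneg _), frobenius_norm_transpose_mul_mul_sq,
      frobenius_norm_transpose_mul_mul_sq, transpose_transpose, hR]
  rw [htrace, hnorm]
  exact abs_trace_le _

theorem frobenius_norm_sub_mul_mul_sq_eq (A M : Matrix n n ℝ) (hM : Mᵀ = M) :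
    ‖A - M * A * M‖ ^ 2
      = ‖A‖ ^ 2 - 2 * trace (Aᵀ * M * A * M) + trace (Aᵀ * (M * M) * A * (M * M)) := by
  have h₁ : trace (M * (Aᵀ * M * A)) = trace (Aᵀ * M * A * M) := trace_mul_comm _ _
  have h₂ : trace (M * (Aᵀ * (M * M) * A * M)) = trace (Aᵀ * (M * M) * A * (M * M)) := by
    rw [trace_mul_comm]
    simp only [Matrix.mul_assoc]
  rw [frobenius_norm_sq_eq_trace, frobenius_norm_sq_eq_trace]
  simp only [transpose_sub, transpose_mul, hM, Matrix.sub_mul, Matrix.mul_sub, trace_sub]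
  simp only [Matrix.mul_assoc] at h₁ h₂ ⊢
  rw [h₁, h₂]
  ring

theorem frobenius_norm_sub_mul_mul_sq_le (A M : Matrix n n ℝ) (hM : Mᵀ = M) :
    ‖A - M * A * M‖ ^ 2 ≤
      ‖A‖ ^ 2 - trace (Aᵀ * M * A * M) + ‖A‖ ^ 2 * ‖M * M - M‖ * (‖M‖ ^ 2 + ‖M‖) := by
  set D := M * M - M
  have hsplit : trace (Aᵀ * (M * M) * A * (M * M)) - trace (Aᵀ * M * A * M)
      = trace (Aᵀ * D * A * (M * M)) + trace (Aᵀ * M * A * D) := by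
    rw [← trace_add, ← trace_sub]
    congr 1
    simp only [D]
    noncomm_ring
  have hbound : ∀ (B C : Matrix n n ℝ), |trace (Aᵀ * B * A * C)| ≤ ‖A‖ ^ 2 * ‖B‖ * ‖C‖ := by
    intro B C
    calc |trace (Aᵀ * B * A * C)| ≤ ‖Aᵀ‖ * ‖B‖ * ‖A‖ * ‖C‖ := by
          refine (abs_trace_mul_le _ _).trans ?_
          gcongr
          exact (frobenius_norm_mul _ _).trans
            (mul_le_mul_of_nonneg_right (frobenius_norm_mul _ _) (norm_nonneg _))
      _ = ‖A‖ ^ 2 * ‖B‖ * ‖C‖ := by rw [frobenius_norm_transpose]; ring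
  have hMM : ‖M * M‖ ≤ ‖M‖ ^ 2 := by rw [sq]; exact frobenius_norm_mul _ _
  have h₁ := hbound D (M * M)
  have h₂ := hbound M D
  rw [frobenius_norm_sub_mul_mul_sq_eq A M hM]
  nlinarith [abs_le.mp h₁, abs_le.mp h₂, mul_le_mul_of_nonneg_left hMM
    (mul_nonneg (sq_nonneg ‖A‖) (norm_nonneg D))]

theorem trace_sub_trace_mul_eq (A M : Matrix n n ℝ) :
    trace A - trace (A * M) = trace (A - M * A * M) + trace (A * (M * M - M)) := by
  have h : trace (M * A * M) = trace (A * (M * M)) := by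
    rw [trace_mul_cycle, trace_mul_comm]
  rw [trace_sub A, h, Matrix.mul_sub, trace_sub]
  ring

theorem abs_trace_sub_trace_mul_le [DecidableEq n] (A M : Matrix n n ℝ) (hM : Mᵀ = M) :
    |trace A - trace (A * M)| ≤
      √(Fintype.card n) * √(‖A‖ ^ 2 - trace (Aᵀ * M * A * M)
        + ‖A‖ ^ 2 * ‖M * M - M‖ * (‖M‖ ^ 2 + ‖M‖)) + ‖A‖ * ‖M * M - M‖ := by
  rw [trace_sub_trace_mul_eq]
  refine (abs_add_le _ _).trans (add_le_add ((abs_trace_le _).trans ?_) (abs_trace_mul_le _ _))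
  gcongr
  exact Real.le_sqrt_of_sq_le (frobenius_norm_sub_mul_mul_sq_le A M hM)

theorem card_le_of_abs_gram_sub_one_lt [DecidableEq ι] {E : Matrix m ι ℝ} {ε : ℝ}
    (hε : Fintype.card ι * ε ≤ 1) (hG : ∀ i j, |(Eᵀ * E) i j - (1 : Matrix ι ι ℝ) i j| < ε) :
    Fintype.card ι ≤ Fintype.card m := by
  have hdet : (Eᵀ * E).det ≠ 0 := by
    refine det_ne_zero_of_sum_row_lt_diag fun i => ?_
    have hdiag : 1 - ε < ‖(Eᵀ * E) i i‖ := by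
      have := (abs_lt.mp (hG i i)).1
      rw [one_apply_eq] at this
      linarith [le_abs_self ((Eᵀ * E) i i), Real.norm_eq_abs ((Eᵀ * E) i i)]
    calc ∑ j ∈ Finset.univ.erase i, ‖(Eᵀ * E) i j‖ ≤ ∑ _j ∈ Finset.univ.erase i, ε := by
          refine Finset.sum_le_sum fun j hj => ?_
          simpa [one_apply_ne' (Finset.ne_of_mem_erase hj)] using (hG i j).le
      _ = (Fintype.card ι - 1) * ε := by
          rw [Finset.sum_const, Finset.card_erase_of_mem (Finset.mem_univ i), nsmul_eq_mul,
            Finset.card_univ, Nat.cast_pred (Fintype.card_pos_iff.mpr ⟨i⟩)]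
      _ ≤ 1 - ε := by linarith
      _ < ‖(Eᵀ * E) i i‖ := hdiag
  calc Fintype.card ι = (Eᵀ * E).rank :=
        (rank_of_isUnit _ ((isUnit_iff_isUnit_det _).mpr (Ne.isUnit hdet))).symm
    _ ≤ E.rank := rank_mul_le_right _ _
    _ ≤ Fintype.card m := rank_le_card_height E

theorem le_of_abs_gram_sub_one_lt {d k : ℕ} {E : Matrix (Fin d) (Fin k) ℝ} {ε : ℝ}
    (hε : (d + 1) * ε ≤ 1)
    (hG : ∀ i j, |(Eᵀ * E) i j - (1 : Matrix (Fin k) (Fin k) ℝ) i j| < ε) : k ≤ d := by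
  by_contra! hdk
  set f := Fin.castLE (Nat.succ_le_of_lt hdk)
  have hsub : (E.submatrix id f)ᵀ * E.submatrix id f = (Eᵀ * E).submatrix f f := by
    rw [transpose_submatrix, ← submatrix_mul _ _ _ _ _ Function.bijective_id]
  have := card_le_of_abs_gram_sub_one_lt (E := E.submatrix id f) (by simpa using hε)
    (fun i j => by
      rw [hsub, ← submatrix_one _ (Fin.castLE_injective _)]
      exact hG _ _)
  simp at this

theorem frobenius_norm_sq_le_of_abs_gram_sub_one_le [DecidableEq ι] {E : Matrix m ι ℝ} {ε : ℝ}
    (hG : ∀ i j, |(Eᵀ * E) i j - (1 : Matrix ι ι ℝ) i j| ≤ ε) :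
    ‖E‖ ^ 2 ≤ Fintype.card ι * (1 + ε) := by
  rw [frobenius_norm_sq_eq_trace, trace]
  calc ∑ i, (Eᵀ * E) i i ≤ ∑ _i : ι, (1 + ε) := by
        refine Finset.sum_le_sum fun i _ => ?_
        have := (abs_le.mp (hG i i)).2
        rw [one_apply_eq] at this
        linarith
    _ = _ := by simp [mul_add]

theorem frobenius_norm_gram_sub_one_le [DecidableEq ι] {E : Matrix m ι ℝ} {ε : ℝ} (hε : 0 ≤ ε)
    (hG : ∀ i j, |(Eᵀ * E) i j - (1 : Matrix ι ι ℝ) i j| ≤ ε) :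
    ‖Eᵀ * E - 1‖ ≤ Fintype.card ι * ε := by
  refine (pow_le_pow_iff_left₀ (norm_nonneg _) (by positivity) two_ne_zero).mp ?_
  exact (frobenius_norm_sq_le_of_abs_le (by simpa only [Matrix.sub_apply] using hG)).trans_eq
    (by ring)

theorem abs_trace_sub_trace_conj_le [DecidableEq m] [DecidableEq n] {A : Matrix m m ℝ}
    {E : Matrix m n ℝ} {L c δ η : ℝ} (hA : ‖A‖ ≤ L) (hE : ‖E‖ ^ 2 ≤ c) (hG : ‖Eᵀ * E - 1‖ ≤ δ)
    (hη : ‖A‖ ^ 2 - ‖Eᵀ * A * E‖ ^ 2 ≤ η) :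
    |trace A - trace (Eᵀ * A * E)| ≤
      √(Fintype.card m) * √(η + L ^ 2 * (c * δ) * (c ^ 2 + c)) + L * (c * δ) := by
  set M := E * Eᵀ
  have hM : Mᵀ = M := by simp [M]
  have hMc : ‖M‖ ≤ c := by
    refine (frobenius_norm_mul _ _).trans ?_
    rwa [frobenius_norm_transpose, ← sq]
  have hDcδ : ‖M * M - M‖ ≤ c * δ := by
    have hD : M * M - M = E * (Eᵀ * E - 1) * Eᵀ := by
      simp [M, Matrix.mul_sub, Matrix.sub_mul, Matrix.mul_assoc]
    rw [hD]
    calc ‖E * (Eᵀ * E - 1) * Eᵀ‖ ≤ ‖E‖ * ‖Eᵀ * E - 1‖ * ‖Eᵀ‖ :=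
          (frobenius_norm_mul _ _).trans
            (mul_le_mul_of_nonneg_right (frobenius_norm_mul _ _) (norm_nonneg _))
      _ = ‖E‖ ^ 2 * ‖Eᵀ * E - 1‖ := by rw [frobenius_norm_transpose]; ring
      _ ≤ c * δ := by gcongr; exact (sq_nonneg _).trans hE
  rw [frobenius_norm_transpose_mul_mul_sq] at hη
  rw [trace_transpose_mul_mul]
  refine (abs_trace_sub_trace_mul_le A M hM).trans ?_
  have hc : 0 ≤ c := (sq_nonneg _).trans hE
  have hδ : 0 ≤ δ := (norm_nonneg _).trans hG
  have hL : 0 ≤ L := (norm_nonneg _).trans hA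
  gcongr

end Frobenius

/-- For `(n + 1) ε < 1` the family has at most `n` members, so `‖E‖² ≤ 2n` and `‖EᵀE - 1‖ ≤ nε`
in `abs_trace_sub_trace_conj_le`; otherwise `|tr A| + |tr (Eᵀ A E)|` is bounded crudely. The
summand `ε` makes the bound strict. -/
noncomputable def traceDefectBound (n : ℕ) (L ε : ℝ) : ℝ :=
  ε + if (n + 1) * ε < 1 then
    √n * √(ε + L ^ 2 * (2 * n * (n * ε)) * ((2 * n) ^ 2 + 2 * n)) + L * (2 * n * (n * ε))
  else √n * L + √n * √(L ^ 2 + ε)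

theorem tendsto_traceDefectBound (n : ℕ) (L : ℝ) :
    Tendsto (traceDefectBound n L) (𝓝[>] (0 : ℝ)) (𝓝 0) := by
  set f : ℝ → ℝ := fun ε => ε + (√n * √(ε + L ^ 2 * (2 * n * (n * ε)) * ((2 * n) ^ 2 + 2 * n))
    + L * (2 * n * (n * ε)))
  have hf : Tendsto f (𝓝 0) (𝓝 0) := by
    have hcont : Continuous f := by fun_prop
    simpa [f] using hcont.tendsto 0
  have hsmall : ∀ᶠ ε in 𝓝 (0 : ℝ), ((n : ℝ) + 1) * ε < 1 :=
    (continuous_const.mul continuous_id).continuousAt.eventually_lt continuousAt_const (by simp)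
  refine (tendsto_nhdsWithin_of_tendsto_nhds hf).congr' ?_
  filter_upwards [nhdsWithin_le_nhds hsmall] with ε hε
  simp only [traceDefectBound, if_pos hε, f]

theorem abs_trace_sub_trace_conj_lt_traceDefectBound {n k : ℕ} {A : Matrix (Fin n) (Fin n) ℝ}
    {E : Matrix (Fin n) (Fin k) ℝ} {L ε : ℝ} (hε : 0 < ε) (hA : ‖A‖ ≤ L)
    (hG : ∀ i j, |(Eᵀ * E) i j - (1 : Matrix (Fin k) (Fin k) ℝ) i j| < ε)
    (hX : |‖A‖ ^ 2 - ‖Eᵀ * A * E‖ ^ 2| < ε) :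
    |trace A - trace (Eᵀ * A * E)| < traceDefectBound n L ε := by
  refine lt_add_of_pos_of_le hε ?_
  have hXA : ‖Eᵀ * A * E‖ ^ 2 ≤ L ^ 2 + ε := by
    have := (abs_lt.mp hX).1
    nlinarith [norm_nonneg A]
  split_ifs with hsmall
  · have hk : (k : ℝ) ≤ n := by exact_mod_cast le_of_abs_gram_sub_one_lt hsmall.le hG
    have hG' := fun i j => (hG i j).le
    have hE : ‖E‖ ^ 2 ≤ 2 * n := by
      refine (frobenius_norm_sq_le_of_abs_gram_sub_one_le hG').trans ?_
      rw [Fintype.card_fin]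
      nlinarith [n.cast_nonneg (α := ℝ)]
    have hGn : ‖Eᵀ * E - 1‖ ≤ n * ε := by
      refine (frobenius_norm_gram_sub_one_le hε.le hG').trans ?_
      rw [Fintype.card_fin]
      gcongr
    simpa using abs_trace_sub_trace_conj_le hA hE hGn (by linarith [(abs_lt.mp hX).2])
  · refine (abs_sub _ _).trans (add_le_add ((abs_trace_le A).trans ?_)
      ((abs_trace_transpose_mul_mul_le A E).trans ?_))
    · simpa using mul_le_mul_of_nonneg_left hA (Real.sqrt_nonneg n)
    · simpa using mul_le_mul_of_nonneg_left (Real.le_sqrt_of_sq_le hXA) (Real.sqrt_nonneg n)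

theorem transpose_mul_toMatrix₂_mul_apply {ι κ : Type*} [Fintype ι] [DecidableEq ι]
    (T : EuclideanSpace ℝ ι →ₗ[ℝ] EuclideanSpace ℝ ι →ₗ[ℝ] ℝ) (e : κ → EuclideanSpace ℝ ι)
    (i j : κ) :
    ((of fun a i => e i a)ᵀ * LinearMap.toMatrix₂ (EuclideanSpace.basisFun ι ℝ).toBasis
      (EuclideanSpace.basisFun ι ℝ).toBasis T * of fun a i => e i a) i j = T (e i) (e j) := by
  conv_rhs => rw [← toLinearMap₂_toMatrix₂ (EuclideanSpace.basisFun ι ℝ).toBasis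
      (EuclideanSpace.basisFun ι ℝ).toBasis T]
  rw [toLinearMap₂_apply]
  simp only [mul_apply, transpose_apply, of_apply, LinearMap.toMatrix₂_apply,
    OrthonormalBasis.coe_toBasis, EuclideanSpace.basisFun_apply, Finset.sum_mul, mul_assoc,
    OrthonormalBasis.coe_toBasis_repr_apply, EuclideanSpace.basisFun_repr, smul_eq_mul]
  exact Finset.sum_comm.trans
    (Finset.sum_congr rfl fun _ _ => Finset.sum_congr rfl fun _ _ => by ring)

theorem stmt1_general (n : ℕ) (L : ℝ) :
    ∃ Ψ : ℝ → ℝ, Tendsto Ψ (𝓝[>] (0 : ℝ)) (𝓝 0) ∧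
      ∀ ε : ℝ, 0 < ε →
        ∀ T : EuclideanSpace ℝ (Fin n) →ₗ[ℝ] EuclideanSpace ℝ (Fin n) →ₗ[ℝ] ℝ,
          bilinNormSq n T ≤ L ^ 2 →
          ∀ (k : ℕ) (e : Fin k → EuclideanSpace ℝ (Fin n)),
            (∀ i j : Fin k,
              |(inner ℝ (e i) (e j) : ℝ) - (if i = j then (1 : ℝ) else 0)| < ε) →
            |bilinNormSq n T - ∑ i : Fin k, ∑ j : Fin k, (T (e i) (e j)) ^ 2| < ε →
            |bilinTrace n T - ∑ i : Fin k, T (e i) (e i)| < Ψ ε := by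
  refine ⟨traceDefectBound n |L|, tendsto_traceDefectBound n |L|,
    fun ε hε T hT k e he hsum => ?_⟩
  set b := (EuclideanSpace.basisFun (Fin n) ℝ).toBasis
  set A := LinearMap.toMatrix₂ b b T
  set E : Matrix (Fin n) (Fin k) ℝ := of fun a i => e i a
  have hX : ∀ i j, T (e i) (e j) = (Eᵀ * A * E) i j := fun i j =>
    (transpose_mul_toMatrix₂_mul_apply T e i j).symm
  have hNormSq : bilinNormSq n T = ‖A‖ ^ 2 := by
    simp [bilinNormSq, frobenius_norm_sq_eq_sum, A, b, LinearMap.toMatrix₂_apply]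
  have hTrace : bilinTrace n T = trace A := by
    simp [bilinTrace, trace, A, b, LinearMap.toMatrix₂_apply]
  have hGram : ∀ i j, (Eᵀ * E) i j = inner ℝ (e i) (e j) := by
    simp [E, mul_apply, PiLp.inner_apply, mul_comm]
  have hA : ‖A‖ ≤ |L| := (le_abs_self _).trans (sq_le_sq.mp (hNormSq ▸ hT))
  rw [hTrace, show ∑ i, T (e i) (e i) = trace (Eᵀ * A * E) by simp [trace, hX]]
  refine abs_trace_sub_trace_conj_lt_traceDefectBound hε hA
    (fun i j => by rw [hGram, one_apply]; exact he i j) ?_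
  rw [← hNormSq, frobenius_norm_sq_eq_sum]
  simpa only [hX] using hsum

theorem stmt1 (n : ℕ) (L : ℝ) (hL : 0 < L) :
    ∃ Ψ : ℝ → ℝ, Tendsto Ψ (𝓝[>] (0 : ℝ)) (𝓝 0) ∧
      ∀ ε : ℝ, 0 < ε →
        ∀ T : EuclideanSpace ℝ (Fin n) →ₗ[ℝ] EuclideanSpace ℝ (Fin n) →ₗ[ℝ] ℝ,
          bilinNormSq n T ≤ L ^ 2 →
          ∀ (k : ℕ) (e : Fin k → EuclideanSpace ℝ (Fin n)),
            (∀ i j : Fin k,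
              |(inner ℝ (e i) (e j) : ℝ) - (if i = j then (1 : ℝ) else 0)| < ε) →
            |bilinNormSq n T - ∑ i : Fin k, ∑ j : Fin k, (T (e i) (e j)) ^ 2| < ε →
            |bilinTrace n T - ∑ i : Fin k, T (e i) (e i)| < Ψ ε :=
  stmt1_general n L
end

section
/- Let V be a finite-dimensional real Hilbert space and 1 < p < 2 with conjugate exponent q = p/(p−1). Then for all u, v ∈ V, |u+v|^q + |u−v|^q ≤ 2(|u|^p + |v|^p)^{q−1}. -/
/-!
Put `A = ‖u + v‖ ≥ B = ‖u - v‖`, `X = (A + B) / 2` and `Y = (A - B) / 2`. The triangle inequality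
puts `‖u‖` in `[Y, X]` and the parallelogram law gives `‖u‖² + ‖v‖² = X² + Y²`, so concavity of
`s ↦ s ^ (p / 2)` yields `X ^ p + Y ^ p ≤ ‖u‖ ^ p + ‖v‖ ^ p`. This reduces the claim to the scalar
inequality `(s + t) ^ q + (s - t) ^ q ≤ 2 (s ^ p + t ^ p) ^ (q - 1)` for `0 ≤ t ≤ s`.

By duality, the scalar inequality says that the bilinear form `(a + b) x + (a - b) y` has norm at
most `2 ^ (1 / q)` on `ℓᵖ(2) × ℓᵖ(2)`, which is proved by complex interpolation: replacing every
entry `c` by `c ^ (p (1 - z / 2))` gives a holomorphic function on the strip `0 ≤ re z ≤ 1`,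
bounded by `(a ^ p + b ^ p) (x ^ p + y ^ p)` on `re z = 0` (triangle inequality), by
`√(2 (a ^ p + b ^ p) (x ^ p + y ^ p))` on `re z = 1` (parallelogram law), and equal to the form at
`z = 2 / q`. Hadamard's three lines theorem concludes.
-/

open Complex Complex.HadamardThreeLines Set

lemma norm_add_mul_add_sub_mul_le {R : Type*} [SeminormedRing R] (α β ξ η : R) :
    ‖(α + β) * ξ + (α - β) * η‖ ≤ (‖α‖ + ‖β‖) * (‖ξ‖ + ‖η‖) :=
  calc ‖(α + β) * ξ + (α - β) * η‖ ≤ ‖α + β‖ * ‖ξ‖ + ‖α - β‖ * ‖η‖ :=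
        (norm_add_le _ _).trans (add_le_add (norm_mul_le _ _) (norm_mul_le _ _))
    _ ≤ (‖α‖ + ‖β‖) * ‖ξ‖ + (‖α‖ + ‖β‖) * ‖η‖ := by
        gcongr; exacts [norm_add_le _ _, norm_sub_le _ _]
    _ = (‖α‖ + ‖β‖) * (‖ξ‖ + ‖η‖) := by ring

lemma norm_add_mul_add_sub_mul_sq_le {𝕜 : Type*} [RCLike 𝕜] (α β ξ η : 𝕜) :
    ‖(α + β) * ξ + (α - β) * η‖ ^ 2 ≤ 2 * (‖α‖ ^ 2 + ‖β‖ ^ 2) * (‖ξ‖ ^ 2 + ‖η‖ ^ 2) :=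
  calc ‖(α + β) * ξ + (α - β) * η‖ ^ 2 ≤ (‖α + β‖ * ‖ξ‖ + ‖α - β‖ * ‖η‖) ^ 2 := by
        gcongr; exact (norm_add_le _ _).trans_eq (by rw [norm_mul, norm_mul])
    _ ≤ (‖α + β‖ ^ 2 + ‖α - β‖ ^ 2) * (‖ξ‖ ^ 2 + ‖η‖ ^ 2) := by
        nlinarith [sq_nonneg (‖α + β‖ * ‖η‖ - ‖α - β‖ * ‖ξ‖)]
    _ = 2 * (‖α‖ ^ 2 + ‖β‖ ^ 2) * (‖ξ‖ ^ 2 + ‖η‖ ^ 2) := by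
        rw [parallelogram_law_with_norm 𝕜 α β]

noncomputable def stripPow (p c : ℝ) (z : ℂ) : ℂ := (c : ℂ) ^ ((p : ℂ) * (1 - z / 2))

section stripPow

variable {p c : ℝ} {z : ℂ}

lemma norm_stripPow (hp : 0 < p) (hc : 0 ≤ c) (hz : z.re < 2) :
    ‖stripPow p c z‖ = c ^ (p * (1 - z.re / 2)) := by
  have hre : ((p : ℂ) * (1 - z / 2)).re = p * (1 - z.re / 2) := by simp
  rw [stripPow, norm_cpow_eq_rpow_re_of_nonneg hc (hre ▸ (mul_pos hp (by linarith)).ne'), hre]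

lemma differentiableAt_stripPow (c : ℝ) (hp : p ≠ 0) (hz : z.re < 2) :
    DifferentiableAt ℂ (stripPow p c) z := by
  refine DifferentiableAt.const_cpow (by fun_prop) (Or.inr (mul_ne_zero (ofReal_ne_zero.2 hp) ?_))
  intro h
  have : z = 2 := by linear_combination -2 * h
  norm_num [this] at hz

lemma norm_stripPow_le (hp : 0 < p) (hc : 0 ≤ c) (hz : z ∈ verticalClosedStrip 0 1) :
    ‖stripPow p c z‖ ≤ max (1 : ℝ) c ^ p := by
  obtain ⟨hz0, hz1⟩ := hz
  rw [norm_stripPow hp hc (by linarith)]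
  calc c ^ (p * (1 - z.re / 2)) ≤ max 1 c ^ (p * (1 - z.re / 2)) := by
        gcongr; exacts [by nlinarith, le_max_right 1 c]
    _ ≤ max 1 c ^ p :=
        Real.rpow_le_rpow_of_exponent_le (le_max_left _ _) (by nlinarith)

lemma stripPow_two_div {q : ℝ} (hpq : p.HolderConjugate q) (c : ℝ) :
    stripPow p c ((2 / q : ℝ) : ℂ) = c := by
  have h : p * (1 - 2 / q / 2) = 1 := by
    have := hpq.symm.ne_zero
    field_simp
    linear_combination hpq.mul_eq_add
  rw [stripPow, show (p : ℂ) * (1 - ((2 / q : ℝ) : ℂ) / 2) = ((p * (1 - 2 / q / 2) : ℝ) : ℂ) by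
    push_cast; ring, h, ofReal_one, cpow_one]

end stripPow

theorem add_mul_add_sub_mul_le_of_holderConjugate {p q : ℝ} (hpq : p.HolderConjugate q)
    (hp2 : p ≤ 2) {a b x y : ℝ} (ha : 0 ≤ a) (hb : 0 ≤ b) (hx : 0 ≤ x) (hy : 0 ≤ y) :
    (a + b) * x + (a - b) * y ≤ 2 ^ (1 / q) * ((a ^ p + b ^ p) * (x ^ p + y ^ p)) ^ (1 / p) := by
  have hp := hpq.pos
  have hq := hpq.symm.pos
  have hpq1 := hpq.inv_add_inv_eq_one
  set P := (a ^ p + b ^ p) * (x ^ p + y ^ p)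
  have hP : 0 ≤ P := by positivity
  set F : ℂ → ℂ := fun z ↦ (stripPow p a z + stripPow p b z) * stripPow p x z +
    (stripPow p a z - stripPow p b z) * stripPow p y z
  have hF : DiffContOnCl ℂ F (verticalStrip 0 1) := by
    refine DifferentiableOn.diffContOnCl fun z hz ↦ DifferentiableAt.differentiableWithinAt ?_
    rw [verticalStrip, closure_preimage_re, closure_Ioo zero_ne_one] at hz
    have hg (c : ℝ) := differentiableAt_stripPow c hp.ne' (by linarith [hz.2] : z.re < 2)
    exact (((hg a).add (hg b)).mul (hg x)).add (((hg a).sub (hg b)).mul (hg y))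
  have hbdd : BddAbove ((norm ∘ F) '' verticalClosedStrip 0 1) := by
    refine ⟨(max 1 a ^ p + max 1 b ^ p) * (max 1 x ^ p + max 1 y ^ p), ?_⟩
    rintro _ ⟨z, hz, rfl⟩
    refine (norm_add_mul_add_sub_mul_le _ _ _ _).trans ?_
    gcongr <;> exact norm_stripPow_le hp ‹_› hz
  have hF0 : ∀ z ∈ re ⁻¹' {0}, ‖F z‖ ≤ P := by
    intro z (hz : z.re = 0)
    have hg {c : ℝ} (hc : 0 ≤ c) : ‖stripPow p c z‖ = c ^ p := by
      simp [norm_stripPow hp hc (by linarith : z.re < 2), hz]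
    refine (norm_add_mul_add_sub_mul_le _ _ _ _).trans_eq ?_
    rw [hg ha, hg hb, hg hx, hg hy]
  have hF1 : ∀ z ∈ re ⁻¹' {1}, ‖F z‖ ≤ √(2 * P) := by
    intro z (hz : z.re = 1)
    have hg {c : ℝ} (hc : 0 ≤ c) : ‖stripPow p c z‖ ^ 2 = c ^ p := by
      rw [norm_stripPow hp hc (by linarith : z.re < 2), hz, ← Real.rpow_natCast,
        ← Real.rpow_mul hc]
      congr 1
      push_cast
      ring
    refine Real.le_sqrt_of_sq_le ((norm_add_mul_add_sub_mul_sq_le _ _ _ _).trans_eq ?_)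
    rw [hg ha, hg hb, hg hx, hg hy, mul_assoc]
  have hq2 : 2 ≤ q := (inv_le_inv₀ hq two_pos).1 (by linarith [inv_anti₀ hp hp2])
  have hz₀ : ((2 / q : ℝ) : ℂ) ∈ verticalClosedStrip 0 1 := by
    simp only [verticalClosedStrip, mem_preimage, ofReal_re, mem_Icc]
    exact ⟨by positivity, (div_le_one hq).2 hq2⟩
  have hFz₀ : F ((2 / q : ℝ) : ℂ) = ((a + b) * x + (a - b) * y : ℝ) := by
    simp only [F, stripPow_two_div hpq]
    push_cast
    ring
  have key := norm_le_interp_of_mem_verticalClosedStrip₀₁' F hz₀ hF hbdd hF0 hF1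
  rw [hFz₀, norm_real, ofReal_re, Real.norm_eq_abs] at key
  calc (a + b) * x + (a - b) * y ≤ P ^ (1 - 2 / q) * √(2 * P) ^ (2 / q) :=
        (le_abs_self _).trans key
    _ = 2 ^ (1 / q) * (P ^ (1 - 2 / q) * P ^ (1 / q)) := by
        rw [Real.sqrt_eq_rpow, ← Real.rpow_mul (by positivity), Real.mul_rpow zero_le_two hP]
        ring_nf
    _ = 2 ^ (1 / q) * P ^ (1 / p) := by
        have h : 1 - 2 / q + 1 / q = 1 / p := by
          rw [one_div, one_div, ← hpq1]; ring
        rw [← Real.rpow_add' hP (h.trans_ne (one_div_ne_zero hp.ne')), h]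

theorem add_rpow_add_sub_rpow_le {p q : ℝ} (hpq : p.HolderConjugate q) (hp2 : p ≤ 2)
    {s t : ℝ} (ht : 0 ≤ t) (hts : t ≤ s) :
    (s + t) ^ q + (s - t) ^ q ≤ 2 * (s ^ p + t ^ p) ^ (q - 1) := by
  have hp := hpq.pos
  have hq := hpq.symm.pos
  have hdual {c : ℝ} (hc : 0 ≤ c) : c * c ^ (q - 1) = c ^ q ∧ (c ^ (q - 1)) ^ p = c ^ q := by
    refine ⟨?_, ?_⟩
    · rw [mul_comm, ← Real.rpow_add_one' hc (by linarith), sub_add_cancel]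
    · rw [← Real.rpow_mul hc]
      congr 1
      linear_combination hpq.mul_eq_add
  have hA : 0 ≤ s + t := by linarith
  have hB : 0 ≤ s - t := by linarith
  set S := (s + t) ^ q + (s - t) ^ q with hS_def
  set N := s ^ p + t ^ p
  have hS : 0 ≤ S := add_nonneg (Real.rpow_nonneg hA q) (Real.rpow_nonneg hB q)
  have hN : 0 ≤ N := add_nonneg (Real.rpow_nonneg (ht.trans hts) p) (Real.rpow_nonneg ht p)
  have key := add_mul_add_sub_mul_le_of_holderConjugate hpq hp2 (ht.trans hts) ht
    (Real.rpow_nonneg hA (q - 1)) (Real.rpow_nonneg hB (q - 1))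
  rw [(hdual hA).1, (hdual hB).1, (hdual hA).2, (hdual hB).2, ← hS_def, Real.mul_rpow hN hS]
    at key
  rcases hS.eq_or_lt with hS0 | hS0
  · rw [← hS0]; positivity
  have hSq : S ^ (1 / q) ≤ 2 ^ (1 / q) * N ^ (1 / p) := by
    refine le_of_mul_le_mul_left ?_ (Real.rpow_pos_of_pos hS0 (1 / p))
    calc S ^ (1 / p) * S ^ (1 / q) = S := by
          rw [← Real.rpow_add hS0, hpq.one_div_add_one_div, div_one, Real.rpow_one]
      _ ≤ 2 ^ (1 / q) * (N ^ (1 / p) * S ^ (1 / p)) := key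
      _ = S ^ (1 / p) * (2 ^ (1 / q) * N ^ (1 / p)) := by ring
  calc S = (S ^ (1 / q)) ^ q := by
        rw [← Real.rpow_mul hS, one_div_mul_cancel hq.ne', Real.rpow_one]
    _ ≤ (2 ^ (1 / q) * N ^ (1 / p)) ^ q := by gcongr
    _ = 2 * N ^ (q - 1) := by
        rw [Real.mul_rpow (by positivity) (by positivity), ← Real.rpow_mul zero_le_two,
          ← Real.rpow_mul hN, one_div_mul_cancel hq.ne', Real.rpow_one]
        congr 2
        field_simp
        linear_combination -hpq.mul_eq_add

theorem ConcaveOn.map_add_map_le_of_mem_Icc {f : ℝ → ℝ} {m M s : ℝ}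
    (hf : ConcaveOn ℝ (Icc m M) f) (hs : s ∈ Icc m M) :
    f m + f M ≤ f s + f (m + M - s) := by
  have hmM : m ≤ M := hs.1.trans hs.2
  obtain ⟨θ, η, hθ, hη, hθη, rfl⟩ : s ∈ segment ℝ m M := by rwa [segment_eq_Icc hmM]
  have hm : m ∈ Icc m M := left_mem_Icc.2 hmM
  have hM : M ∈ Icc m M := right_mem_Icc.2 hmM
  have h₁ := hf.2 hm hM hθ hη hθη
  have h₂ := hf.2 hm hM hη hθ (by rw [add_comm, hθη])
  rw [show m + M - (θ • m + η • M) = η • m + θ • M by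
    simp only [smul_eq_mul]; linear_combination (-(m + M)) * hθη]
  simp only [smul_eq_mul] at h₁ h₂
  linear_combination h₁ + h₂ - (f m + f M) * hθη

lemma sq_rpow_div_two {c : ℝ} (hc : 0 ≤ c) (p : ℝ) : (c ^ 2) ^ (p / 2) = c ^ p := by
  rw [← Real.rpow_natCast, ← Real.rpow_mul hc]
  congr 1
  push_cast
  ring

theorem rpow_add_rpow_le_norm_rpow_add_norm_rpow {V : Type*} [NormedAddCommGroup V]
    [InnerProductSpace ℝ V] {p : ℝ} (hp0 : 0 ≤ p) (hp2 : p ≤ 2) {u v : V}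
    (h : ‖u - v‖ ≤ ‖u + v‖) :
    ((‖u + v‖ + ‖u - v‖) / 2) ^ p + ((‖u + v‖ - ‖u - v‖) / 2) ^ p ≤ ‖u‖ ^ p + ‖v‖ ^ p := by
  set X := (‖u + v‖ + ‖u - v‖) / 2 with hX_def
  set Y := (‖u + v‖ - ‖u - v‖) / 2 with hY_def
  have hY : 0 ≤ Y := div_nonneg (sub_nonneg.2 h) zero_le_two
  have hX : 0 ≤ X := by positivity
  have hsum : Y ^ 2 + X ^ 2 - ‖u‖ ^ 2 = ‖v‖ ^ 2 := by
    linear_combination (1 / 2 : ℝ) * parallelogram_law_with_norm ℝ u v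
  have h2u : ‖(u + v) + (u - v)‖ = 2 * ‖u‖ := by
    rw [show (u + v) + (u - v) = (2 : ℝ) • u by module, norm_smul, Real.norm_two]
  have hYu : Y ≤ ‖u‖ := by linarith [hY_def, norm_le_add_norm_add (u + v) (u - v)]
  have huX : ‖u‖ ≤ X := by linarith [hX_def, norm_add_le (u + v) (u - v)]
  have hf : ConcaveOn ℝ (Icc (Y ^ 2) (X ^ 2)) fun s : ℝ ↦ s ^ (p / 2) :=
    (Real.concaveOn_rpow (by positivity) (by linarith)).subset
      (fun s hs ↦ (sq_nonneg Y).trans hs.1) (convex_Icc _ _)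
  have key := hf.map_add_map_le_of_mem_Icc
    ⟨pow_le_pow_left₀ hY hYu 2, pow_le_pow_left₀ (norm_nonneg u) huX 2⟩
  simp only [hsum, sq_rpow_div_two hX, sq_rpow_div_two hY, sq_rpow_div_two (norm_nonneg _)] at key
  linarith

theorem stmt2_general {V : Type*} [NormedAddCommGroup V] [InnerProductSpace ℝ V]
    (p q : ℝ) (hp1 : 1 < p) (hp2 : p < 2)
    (hq : q = p / (p - 1)) (u v : V) :
    ‖u + v‖ ^ q + ‖u - v‖ ^ q ≤ 2 * (‖u‖ ^ p + ‖v‖ ^ p) ^ (q - 1) := by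
  have hpq : p.HolderConjugate q := (Real.holderConjugate_iff_eq_conjExponent hp1).2 hq
  wlog h : ‖u - v‖ ≤ ‖u + v‖ generalizing v
  · have := this (-v) (by rw [sub_neg_eq_add, ← sub_eq_add_neg]; exact (not_le.1 h).le)
    rwa [sub_neg_eq_add, ← sub_eq_add_neg, norm_neg, add_comm] at this
  have hY : 0 ≤ (‖u + v‖ - ‖u - v‖) / 2 := div_nonneg (sub_nonneg.2 h) zero_le_two
  calc ‖u + v‖ ^ q + ‖u - v‖ ^ q
      = ((‖u + v‖ + ‖u - v‖) / 2 + (‖u + v‖ - ‖u - v‖) / 2) ^ q +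
        ((‖u + v‖ + ‖u - v‖) / 2 - (‖u + v‖ - ‖u - v‖) / 2) ^ q := by ring_nf
    _ ≤ 2 * (((‖u + v‖ + ‖u - v‖) / 2) ^ p + ((‖u + v‖ - ‖u - v‖) / 2) ^ p) ^ (q - 1) :=
        add_rpow_add_sub_rpow_le hpq hp2.le hY (by linarith [norm_nonneg (u - v)])
    _ ≤ 2 * (‖u‖ ^ p + ‖v‖ ^ p) ^ (q - 1) := by
        gcongr 2 * ?_ ^ _
        · linarith [hpq.symm.lt]
        · exact rpow_add_rpow_le_norm_rpow_add_norm_rpow (by linarith) hp2.le h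

theorem stmt2 {V : Type*} [NormedAddCommGroup V] [InnerProductSpace ℝ V]
    [FiniteDimensional ℝ V] (p q : ℝ) (hp1 : 1 < p) (hp2 : p < 2)
    (hq : q = p / (p - 1)) (u v : V) :
    ‖u + v‖ ^ q + ‖u - v‖ ^ q ≤ 2 * (‖u‖ ^ p + ‖v‖ ^ p) ^ (q - 1) :=
  stmt2_general p q hp1 hp2 hq u v
end

section
/- Let (X, μ) be a finite measure space, V a finite-dimensional Hilbert space, 1 < p < ∞, and Tᵢ → T in L^p(X; V). Then Tᵢ^{(p−1)} → T^{(p−1)} in L^q(X; V), where q is the conjugate exponent and v^{(p−1)} := |v|^{p−2}v (with 0^{(p−1)} = 0). -/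
/-!
Since `v ↦ ‖v‖ ^ (p - 2) • v` is continuous, convergence in measure of `Tᵢ` to `T` (which
follows from convergence in `L^p`) passes to the images. Since `‖‖v‖ ^ (p - 2) • v‖ ^ q = ‖v‖ ^ p`,
on every set the `L^q` norm of the image of `f` is the `(p - 1)`-th power of the `L^p` norm of `f`,
so uniform integrability in `L^p` passes to uniform integrability in `L^q`. Vitali's convergence
theorem concludes.
-/

open MeasureTheory Filter Topology

section DualityMap

variable {V : Type*} [NormedAddCommGroup V] [NormedSpace ℝ V]

/-- The paper's `v^{(p-1)}`. The factor `‖v‖ ^ (p - 2)` is a junk value at `v = 0`, where it is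
multiplied by `0`. -/
noncomputable def dualityMap (p : ℝ) (v : V) : V := ‖v‖ ^ (p - 2) • v

variable {p : ℝ}

lemma dualityMap_zero (p : ℝ) : dualityMap p (0 : V) = 0 := smul_zero _

lemma norm_dualityMap (hp : p ≠ 1) (v : V) : ‖dualityMap p v‖ = ‖v‖ ^ (p - 1) := by
  rcases eq_or_ne v 0 with rfl | hv
  · simp [dualityMap, Real.zero_rpow (sub_ne_zero.2 hp)]
  · rw [dualityMap, norm_smul, Real.norm_of_nonneg (by positivity),
      ← Real.rpow_add_one (norm_ne_zero_iff.2 hv)]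
    ring_nf

lemma continuous_dualityMap (hp : 1 < p) : Continuous (dualityMap (V := V) p) := by
  refine continuous_iff_continuousAt.2 fun v ↦ ?_
  rcases eq_or_ne v 0 with rfl | hv
  · have hnorm := (continuous_norm.rpow_const (p := p - 1) fun _ ↦ Or.inr (by linarith)).tendsto
      (0 : V)
    rw [norm_zero, Real.zero_rpow (by linarith)] at hnorm
    rw [ContinuousAt, dualityMap_zero]
    exact squeeze_zero_norm (fun w ↦ (norm_dualityMap hp.ne' w).le) hnorm
  · exact (continuous_norm.continuousAt.rpow_const (Or.inl (norm_ne_zero_iff.2 hv))).smul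
      continuousAt_id

section Lp

variable {X : Type*} [MeasurableSpace X] {μ : Measure X}

lemma eLpNorm_dualityMap (hp : 1 < p) (f : X → V) :
    eLpNorm (fun x ↦ dualityMap p (f x)) (ENNReal.ofReal (p / (p - 1))) μ
      = eLpNorm f (ENNReal.ofReal p) μ ^ (p - 1) := by
  have hp1 : 0 < p - 1 := by linarith
  rw [eLpNorm_congr_norm_ae (g := fun x ↦ ‖f x‖ ^ (p - 1)) (Eventually.of_forall fun x ↦ by
      rw [norm_dualityMap hp.ne', Real.norm_of_nonneg (by positivity)]),
    eLpNorm_norm_rpow f hp1, ← ENNReal.ofReal_mul (by positivity), div_mul_cancel₀ p hp1.ne']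

lemma MeasureTheory.MemLp.dualityMap_comp (hp : 1 < p) {f : X → V}
    (hf : MemLp f (ENNReal.ofReal p) μ) :
    MemLp (fun x ↦ dualityMap p (f x)) (ENNReal.ofReal (p / (p - 1))) μ := by
  refine ⟨(continuous_dualityMap hp).comp_aestronglyMeasurable hf.1, ?_⟩
  rw [eLpNorm_dualityMap hp]
  exact ENNReal.rpow_lt_top_of_nonneg (by linarith) hf.2.ne

lemma MeasureTheory.UnifIntegrable.dualityMap_comp {ι : Type*} (hp : 1 < p) {f : ι → X → V}
    (hf : UnifIntegrable f (ENNReal.ofReal p) μ) :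
    UnifIntegrable (fun i x ↦ dualityMap p (f i x)) (ENNReal.ofReal (p / (p - 1))) μ := by
  have hp1 : 0 < p - 1 := by linarith
  intro ε hε
  obtain ⟨δ, hδ, hfδ⟩ := hf (Real.rpow_pos_of_pos hε (p - 1)⁻¹)
  refine ⟨δ, hδ, fun i s hs hμs ↦ ?_⟩
  change eLpNorm (s.indicator (dualityMap p ∘ f i)) _ μ ≤ _
  rw [Set.indicator_comp_of_zero (dualityMap_zero p), Function.comp_def, eLpNorm_dualityMap hp]
  calc eLpNorm (s.indicator (f i)) (ENNReal.ofReal p) μ ^ (p - 1)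
      ≤ ENNReal.ofReal (ε ^ (p - 1)⁻¹) ^ (p - 1) :=
        ENNReal.rpow_le_rpow (hfδ i s hs hμs) hp1.le
    _ = ENNReal.ofReal ε := by
        rw [ENNReal.ofReal_rpow_of_nonneg (by positivity) hp1.le,
          ← Real.rpow_mul hε.le, inv_mul_cancel₀ hp1.ne', Real.rpow_one]

end Lp

end DualityMap

lemma Continuous.comp_tendstoInMeasure {X E F : Type*} [MeasurableSpace X] {μ : Measure X}
    [IsFiniteMeasure μ] [PseudoEMetricSpace E] [PseudoEMetricSpace F] {Φ : E → F}
    (hΦ : Continuous Φ) {f : ℕ → X → E} {g : X → E} (hf : ∀ n, AEStronglyMeasurable (f n) μ)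
    (hfg : TendstoInMeasure μ f atTop g) :
    TendstoInMeasure μ (fun n x ↦ Φ (f n x)) atTop (fun x ↦ Φ (g x)) := by
  rw [exists_seq_tendstoInMeasure_atTop_iff fun n ↦ hΦ.comp_aestronglyMeasurable (hf n)]
  intro ns hns
  obtain ⟨ns', hns', hae⟩ := (exists_seq_tendstoInMeasure_atTop_iff hf).1 hfg ns hns
  exact ⟨ns', hns', hae.mono fun x hx ↦ (hΦ.tendsto _).comp hx⟩

theorem stmt18_general {X : Type*} [MeasurableSpace X] (μ : Measure X) [IsFiniteMeasure μ]
    {V : Type*} [NormedAddCommGroup V] [InnerProductSpace ℝ V]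
    (p q : ℝ) (hp : 1 < p) (hq : q = p / (p - 1))
    (T : X → V) (Ti : ℕ → X → V)
    (hT : MemLp T (ENNReal.ofReal p) μ)
    (hTi : ∀ i, MemLp (Ti i) (ENNReal.ofReal p) μ)
    (hconv : Tendsto (fun i => eLpNorm (fun x => Ti i x - T x) (ENNReal.ofReal p) μ)
      atTop (𝓝 0)) :
    Tendsto (fun i => eLpNorm
        (fun x => (‖Ti i x‖ ^ (p - 2)) • Ti i x - (‖T x‖ ^ (p - 2)) • T x)
        (ENNReal.ofReal q) μ)
      atTop (𝓝 0) := by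
  subst hq
  change Tendsto (fun i ↦ eLpNorm (fun x ↦ dualityMap p (Ti i x) - dualityMap p (T x)) _ μ) _ _
  have hq : 1 ≤ ENNReal.ofReal (p / (p - 1)) :=
    ENNReal.one_le_ofReal.2 ((one_le_div (by linarith)).2 (by linarith))
  have hmeas : TendstoInMeasure μ Ti atTop T :=
    tendstoInMeasure_of_tendsto_eLpNorm (ENNReal.ofReal_pos.2 (by linarith)).ne'
      (fun i ↦ (hTi i).1) hT.1 hconv
  have hui : UnifIntegrable Ti (ENNReal.ofReal p) μ :=
    unifIntegrable_of_tendsto_Lp (ENNReal.one_le_ofReal.2 hp.le) ENNReal.ofReal_ne_top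
      hTi hT hconv
  exact tendsto_Lp_finite_of_tendstoInMeasure hq ENNReal.ofReal_ne_top
    (fun i ↦ (continuous_dualityMap hp).comp_aestronglyMeasurable (hTi i).1)
    (hT.dualityMap_comp hp) (hui.dualityMap_comp hp)
    ((continuous_dualityMap hp).comp_tendstoInMeasure (fun i ↦ (hTi i).1) hmeas)

theorem stmt18 {X : Type*} [MeasurableSpace X] (μ : Measure X) [IsFiniteMeasure μ]
    {V : Type*} [NormedAddCommGroup V] [InnerProductSpace ℝ V] [FiniteDimensional ℝ V]
    (p q : ℝ) (hp : 1 < p) (hq : q = p / (p - 1))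
    (T : X → V) (Ti : ℕ → X → V)
    (hT : MemLp T (ENNReal.ofReal p) μ)
    (hTi : ∀ i, MemLp (Ti i) (ENNReal.ofReal p) μ)
    (hconv : Tendsto (fun i => eLpNorm (fun x => Ti i x - T x) (ENNReal.ofReal p) μ)
      atTop (𝓝 0)) :
    Tendsto (fun i => eLpNorm
        (fun x => (‖Ti i x‖ ^ (p - 2)) • Ti i x - (‖T x‖ ^ (p - 2)) • T x)
        (ENNReal.ofReal q) μ)
      atTop (𝓝 0) :=
  stmt18_general μ p q hp hq T Ti hT hTi hconv
end
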